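/- arXiv:2408.15181 — 3 statements merged into one kernel-verified Lean document; each statement's English description precedes it below -/
import Mathlib

section
/- Let c ∈ ℕ, let G be a graph, let λ be a c-edge-labeling of G, and let (A, B) be a separation of G of order two such that the two vertices of A ∩ B are adjacent in G. If the restriction of λ to G[A] is a c-gel of G[A] and the restriction of λ to G[B] is a c-gel of G[B], then λ is a c-gel of G. Moreover, if both G[A] and G[B] are good, then G is good. -/
/-- A walk is *increasing* with respect to an edge-labeling if the sequence of labels of its
edges, traversed from the first endpoint to the last, is non-decreasing. -/
def IsIncreasing {V : Type*} (G : SimpleGraph V) (lab : Sym2 V → ℝ) {x y : V}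
    (p : G.Walk x y) : Prop :=
  (p.edges.map lab).Chain' (· ≤ ·)

/-- An edge-labeling is *good* if for every ordered pair `(x, y)` of vertices there do not
exist two distinct increasing paths from `x` to `y`. -/
def IsGoodLabeling {V : Type*} (G : SimpleGraph V) (lab : Sym2 V → ℝ) : Prop :=
  ∀ (x y : V) (p q : G.Walk x y), p.IsPath → q.IsPath →
    IsIncreasing G lab p → IsIncreasing G lab q → p = q

/-- A `c`-gel: a good edge-labeling taking at most `c` distinct values on the edges. -/
def IsCGel {V : Type*} (G : SimpleGraph V) (c : ℕ) (lab : Sym2 V → ℝ) : Prop :=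
  IsGoodLabeling G lab ∧ (lab '' G.edgeSet).ncard ≤ c

/-- The restriction of an edge-labeling of `G` to the induced subgraph on `S`. -/
def restrictLab {V : Type*} (lab : Sym2 V → ℝ) (S : Set V) : Sym2 ↥S → ℝ :=
  fun e => lab (Sym2.map (Subtype.val : ↥S → V) e)

/-!
If an increasing path with both ends in `A` left `A`, it would run through `B \ A` from one
separator vertex to another; as the separator is a clique, the single edge joining them would be
a second increasing path in `G[B]`. So increasing paths between vertices of one side stay on that
side, and an increasing path from `A \ B` to `B \ A` is an `A`-part followed by a `B`-part glued
at a separator vertex. If two such paths `p`, `q` cross at different vertices `s ≠ t`, goodness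
of `G[B]` forces the first label after `s` (resp. `t`) to be smaller than the label of `st`, and
then goodness of `G[A]` yields a contradiction.

For the existence of a good labeling, shift a good labeling of `G[B]` so that it agrees with one
of `G[A]` on the only common edge `ab`, and glue the two.
-/

open SimpleGraph Walk

section IncreasingWalks

variable {V : Type*} {G : SimpleGraph V} {lab : Sym2 V → ℝ} {u v w : V}

lemma isIncreasing_iff (p : G.Walk u v) :
    IsIncreasing G lab p ↔ (p.edges.map lab).IsChain (· ≤ ·) := Iff.rfl

lemma isIncreasing_append_iff {p : G.Walk u v} {q : G.Walk v w} :
    IsIncreasing G lab (p.append q) ↔ IsIncreasing G lab p ∧ IsIncreasing G lab q ∧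
      ∀ α ∈ (p.edges.map lab).getLast?, ∀ β ∈ (q.edges.map lab).head?, α ≤ β := by
  simp only [isIncreasing_iff, edges_append, List.map_append]
  exact List.isChain_append

lemma isIncreasing_cons_iff (h : G.Adj u v) {p : G.Walk v w} :
    IsIncreasing G lab (cons h p) ↔
      IsIncreasing G lab p ∧ ∀ β ∈ (p.edges.map lab).head?, lab s(u, v) ≤ β := by
  simp only [isIncreasing_iff, edges_cons, List.map_cons]
  rw [List.isChain_cons, and_comm]

lemma isIncreasing_cons_nil (h : G.Adj u v) : IsIncreasing G lab (cons h nil) :=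
  (isIncreasing_cons_iff h).2 ⟨List.isChain_nil, by simp⟩

lemma IsIncreasing.of_append_left {p : G.Walk u v} {q : G.Walk v w}
    (h : IsIncreasing G lab (p.append q)) : IsIncreasing G lab p :=
  (isIncreasing_append_iff.1 h).1

lemma IsIncreasing.of_append_right {p : G.Walk u v} {q : G.Walk v w}
    (h : IsIncreasing G lab (p.append q)) : IsIncreasing G lab q :=
  (isIncreasing_append_iff.1 h).2.1

lemma IsIncreasing.getLast_le_head {p : G.Walk u v} {q : G.Walk v w}
    (h : IsIncreasing G lab (p.append q)) :
    ∀ α ∈ (p.edges.map lab).getLast?, ∀ β ∈ (q.edges.map lab).head?, α ≤ β :=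
  (isIncreasing_append_iff.1 h).2.2

lemma IsIncreasing.of_cons {h : G.Adj u v} {p : G.Walk v w}
    (hp : IsIncreasing G lab (cons h p)) : IsIncreasing G lab p :=
  ((isIncreasing_cons_iff h).1 hp).1

lemma isIncreasing_comp_iff {f : ℝ → ℝ} (hf : StrictMono f) (p : G.Walk u v) :
    IsIncreasing G (f ∘ lab) p ↔ IsIncreasing G lab p := by
  simp only [isIncreasing_iff, ← List.map_map, List.isChain_map, hf.le_iff_le]

lemma map_edges_induce {S : Set V} :
    ∀ {x y : V} (p : G.Walk x y) (hp : ∀ z ∈ p.support, z ∈ S),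
      (p.induce S hp).edges.map (Sym2.map (↑)) = p.edges
  | _, _, nil, _ => rfl
  | _, _, cons _ p, _ => by simp [map_edges_induce p]

lemma isIncreasing_induce_iff {S : Set V} (p : G.Walk u v) (hp : ∀ x ∈ p.support, x ∈ S) :
    IsIncreasing (G.induce S) (restrictLab lab S) (p.induce S hp) ↔ IsIncreasing G lab p := by
  rw [isIncreasing_iff, isIncreasing_iff, ← map_edges_induce p hp, List.map_map]
  rfl

end IncreasingWalks

section GoodLabelings

variable {V : Type*} {G : SimpleGraph V} {lab : Sym2 V → ℝ} {S : Set V} {u v : V}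

lemma IsGoodLabeling.congr {lab' : Sym2 V → ℝ} (hg : IsGoodLabeling G lab)
    (h : ∀ e ∈ G.edgeSet, lab e = lab' e) : IsGoodLabeling G lab' := by
  have hmap : ∀ {x y : V} (p : G.Walk x y), p.edges.map lab = p.edges.map lab' :=
    fun p => List.map_congr_left fun e he => h e (p.edges_subset_edgeSet he)
  intro x y p q hp hq ip iq
  exact hg x y p q hp hq (by rwa [isIncreasing_iff, hmap]) (by rwa [isIncreasing_iff, hmap])

lemma IsGoodLabeling.comp_strictMono {f : ℝ → ℝ} (hg : IsGoodLabeling G lab)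
    (hf : StrictMono f) : IsGoodLabeling G (f ∘ lab) := fun x y p q hp hq ip iq =>
  hg x y p q hp hq ((isIncreasing_comp_iff hf p).1 ip) ((isIncreasing_comp_iff hf q).1 iq)

lemma IsGoodLabeling.eq_of_support_subset (hS : IsGoodLabeling (G.induce S) (restrictLab lab S))
    {p q : G.Walk u v} (hp : p.IsPath) (hq : q.IsPath)
    (ip : IsIncreasing G lab p) (iq : IsIncreasing G lab q)
    (hpS : ∀ x ∈ p.support, x ∈ S) (hqS : ∀ x ∈ q.support, x ∈ S) : p = q := by
  have hlift : p.induce S hpS = q.induce S hqS :=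
    hS _ _ _ _ (.of_map (f := (Embedding.induce S).toHom) (by rwa [map_induce]))
      (.of_map (f := (Embedding.induce S).toHom) (by rwa [map_induce]))
      ((isIncreasing_induce_iff p hpS).2 ip) ((isIncreasing_induce_iff q hqS).2 iq)
  rw [← p.map_induce hpS, ← q.map_induce hqS, hlift]

lemma IsGoodLabeling.eq_cons_nil_of_support_subset
    (hS : IsGoodLabeling (G.induce S) (restrictLab lab S)) (h : G.Adj u v)
    {p : G.Walk u v} (hp : p.IsPath) (ip : IsIncreasing G lab p)
    (hpS : ∀ x ∈ p.support, x ∈ S) : p = cons h nil :=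
  hS.eq_of_support_subset hp (by simp [h.ne]) ip (isIncreasing_cons_nil h) hpS
    (by simp [hpS u p.start_mem_support, hpS v p.end_mem_support])

lemma IsGoodLabeling.lab_lt_of_adj_cons (hS : IsGoodLabeling (G.induce S) (restrictLab lab S))
    {s t w y : V} (hts : G.Adj t s) (h : G.Adj s w) {p : G.Walk w y} {q : G.Walk t y}
    (hp : (cons h p).IsPath) (hq : q.IsPath)
    (ip : IsIncreasing G lab (cons h p)) (iq : IsIncreasing G lab q)
    (hpS : ∀ x ∈ (cons h p).support, x ∈ S) (hqS : ∀ x ∈ q.support, x ∈ S)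
    (ht : t ∉ (cons h p).support) (hs : s ∉ q.support) :
    lab s(s, w) < lab s(t, s) := by
  by_contra! hle
  have hr : cons hts (cons h p) = q :=
    hS.eq_of_support_subset (hp.cons ht) hq
      ((isIncreasing_cons_iff hts).2 ⟨ip, by simpa using hle⟩) iq
      (by rw [support_cons, List.forall_mem_cons]; exact ⟨hqS t q.start_mem_support, hpS⟩) hqS
  exact hs (hr ▸ by simp)

lemma IsGoodLabeling.false_of_getLast_lt (hS : IsGoodLabeling (G.induce S) (restrictLab lab S))
    {x s t : V} (hst : G.Adj s t) {p : G.Walk x s} {q : G.Walk x t}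
    (hp : p.IsPath) (hq : q.IsPath) (ip : IsIncreasing G lab p) (iq : IsIncreasing G lab q)
    (hpS : ∀ y ∈ p.support, y ∈ S) (hqS : ∀ y ∈ q.support, y ∈ S)
    (hpl : ∀ α ∈ (p.edges.map lab).getLast?, α < lab s(s, t))
    (hql : ∀ α ∈ (q.edges.map lab).getLast?, α < lab s(s, t)) : False := by
  classical
  by_cases ht : t ∈ p.support
  · -- the part of `p` after `t` is an increasing path from `t` to `s`, hence the edge `ts`
    have ip' := ip
    rw [← p.take_spec ht] at ip'
    have hd : p.dropUntil t ht = cons hst.symm nil :=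
      hS.eq_cons_nil_of_support_subset hst.symm (hp.dropUntil ht) ip'.of_append_right
        fun y hy => hpS y (p.support_dropUntil_subset_support ht hy)
    have hlast : (p.edges.map lab).getLast? = some (lab s(s, t)) := by
      rw [← p.take_spec ht, hd, Sym2.eq_swap]; simp
    exact lt_irrefl _ (hpl _ hlast)
  · have hc : p.concat hst = q := by
      refine hS.eq_of_support_subset (hp.concat ht hst) hq ?_ iq ?_ hqS
      · rw [concat_eq_append, isIncreasing_append_iff]
        refine ⟨ip, isIncreasing_cons_nil hst, fun α hα β hβ => ?_⟩
        simp only [edges_cons, edges_nil, List.map_cons, List.map_nil, List.head?_cons,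
          Option.mem_some_iff] at hβ
        exact hβ ▸ (hpl α hα).le
      · intro y hy
        rw [support_concat, List.mem_append, List.mem_singleton] at hy
        rcases hy with hy | rfl
        exacts [hpS y hy, hqS _ q.end_mem_support]
    exact lt_irrefl _ (hql _ (by simp [← hc, edges_concat]))

lemma lab_lt_of_exits {A B : Set V} (hB : IsGoodLabeling (G.induce B) (restrictLab lab B))
    {s t v w y : V} (hs : s ∈ A ∩ B) (ht : t ∈ A ∩ B) (hts : G.Adj t s)
    (h : G.Adj s v) (h' : G.Adj t w)
    {p : G.Walk v y} {q : G.Walk w y} (hp : (cons h p).IsPath) (hq : (cons h' q).IsPath)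
    (ip : IsIncreasing G lab (cons h p)) (iq : IsIncreasing G lab (cons h' q))
    (hpB : ∀ u ∈ p.support, u ∈ B \ A) (hqB : ∀ u ∈ q.support, u ∈ B \ A) :
    lab s(s, v) < lab s(t, s) := by
  have exit_mem : ∀ {r z : V} (hrz : G.Adj r z) (c : G.Walk z y), r ∈ A ∩ B →
      (∀ u ∈ c.support, u ∈ B \ A) →
        ∀ u ∈ (cons hrz c).support, u ∈ B ∧ (u ∈ A → u = r) := by
    intro r z hrz c hr hc u hu
    rw [support_cons, List.mem_cons] at hu
    rcases hu with rfl | hu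
    exacts [⟨hr.2, fun _ => rfl⟩, ⟨(hc u hu).1, fun huA => absurd huA (hc u hu).2⟩]
  have hp' := exit_mem h p hs hpB
  have hq' := exit_mem h' q ht hqB
  exact hB.lab_lt_of_adj_cons hts h hp hq ip iq (fun u hu => (hp' u hu).1)
    (fun u hu => (hq' u hu).1) (fun htp => hts.ne ((hp' t htp).2 ht.1))
    (fun hsq => hts.ne ((hq' s hsq).2 hs.1).symm)

end GoodLabelings

structure IsSeparation {V : Type*} (G : SimpleGraph V) (A B : Set V) : Prop where
  union_eq : A ∪ B = Set.univ
  not_adj : ∀ u w, u ∈ A \ B → w ∈ B \ A → ¬ G.Adj u w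

namespace IsSeparation

variable {V : Type*} {G : SimpleGraph V} {lab : Sym2 V → ℝ} {A B : Set V}

lemma symm (hS : IsSeparation G A B) : IsSeparation G B A :=
  ⟨by rw [Set.union_comm, hS.union_eq], fun u w hu hw h => hS.not_adj w u hw hu h.symm⟩

lemma mem_right_of_notMem_left (hS : IsSeparation G A B) {v : V} (hv : v ∉ A) : v ∈ B :=
  (hS.union_eq ▸ Set.mem_univ v : v ∈ A ∪ B).resolve_left hv

lemma mem_right_of_adj (hS : IsSeparation G A B) {u v : V} (h : G.Adj u v) (hv : v ∈ B \ A) :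
    u ∈ B := by
  by_contra hu
  exact hS.not_adj u v ⟨hS.symm.mem_right_of_notMem_left hu, hu⟩ hv h

lemma exists_append_of_exists_mem_left (hS : IsSeparation G A B) :
    ∀ {v y : V} (q : G.Walk v y), v ∈ B \ A → (∃ w ∈ q.support, w ∈ A) →
      ∃ s ∈ A ∩ B, ∃ (q₁ : G.Walk v s) (q₂ : G.Walk s y),
        q = q₁.append q₂ ∧ ∀ w ∈ q₁.support, w ∈ B
  | _, _, nil, hv, ⟨w, hw, hwA⟩ => by
    rw [support_nil, List.mem_singleton] at hw
    exact absurd (hw ▸ hwA) hv.2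
  | _, _, cons (v := u) h q, hv, ⟨w, hw, hwA⟩ => by
    have huB : u ∈ B := hS.mem_right_of_adj h.symm hv
    by_cases huA : u ∈ A
    · exact ⟨u, ⟨huA, huB⟩, cons h nil, q, rfl, by simp [hv.1, huB]⟩
    · have hw' : w ∈ q.support := by
        rw [support_cons, List.mem_cons] at hw
        exact hw.resolve_left (by rintro rfl; exact hv.2 hwA)
      obtain ⟨s, hs, q₁, q₂, rfl, hq₁⟩ :=
        hS.exists_append_of_exists_mem_left q ⟨huB, huA⟩ ⟨w, hw', hwA⟩
      refine ⟨s, hs, cons h q₁, q₂, rfl, ?_⟩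
      rw [support_cons, List.forall_mem_cons]
      exact ⟨hv.1, hq₁⟩

lemma notMem_left_of_isIncreasing_cons (hS : IsSeparation G A B) (hK : G.IsClique (A ∩ B))
    (hB : IsGoodLabeling (G.induce B) (restrictLab lab B)) {x v y : V} (h : G.Adj x v)
    {p : G.Walk v y} (hp : (cons h p).IsPath) (ip : IsIncreasing G lab (cons h p))
    (hx : x ∈ A) (hv : v ∉ A) : ∀ w ∈ p.support, w ∉ A := by
  intro w hw hwA
  have hvB : v ∈ B \ A := ⟨hS.mem_right_of_notMem_left hv, hv⟩
  have hxB : x ∈ B := hS.mem_right_of_adj h hvB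
  obtain ⟨s, hs, q₁, q₂, rfl, hq₁⟩ :=
    hS.exists_append_of_exists_mem_left p hvB ⟨w, hw, hwA⟩
  rw [← cons_append] at hp ip
  have hxs : x ≠ s := by
    rintro rfl
    exact (cons_isPath_iff h q₁).1 hp.of_append_left |>.2 q₁.end_mem_support
  -- `cons h q₁` runs inside `B` between the adjacent separator vertices `x` and `s`
  have hq : cons h q₁ = cons (hK ⟨hx, hxB⟩ hs hxs) nil := by
    refine hB.eq_cons_nil_of_support_subset _ hp.of_append_left ip.of_append_left ?_
    rw [support_cons, List.forall_mem_cons]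
    exact ⟨hxB, hq₁⟩
  have hv_eq : v = s := eq_of_length_eq_zero (by simpa using congrArg length hq)
  exact hv (hv_eq ▸ hs.1)

lemma isIncreasing_path_cases (hS : IsSeparation G A B) (hK : G.IsClique (A ∩ B))
    (hB : IsGoodLabeling (G.induce B) (restrictLab lab B)) :
    ∀ {x y : V} (p : G.Walk x y), p.IsPath → IsIncreasing G lab p → x ∈ A →
      (∀ w ∈ p.support, w ∈ A) ∨
        ∃ (s v : V) (p₁ : G.Walk x s) (h : G.Adj s v) (p₂ : G.Walk v y),
          p = p₁.append (cons h p₂) ∧ s ∈ A ∩ B ∧ (∀ w ∈ p₁.support, w ∈ A) ∧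
            ∀ w ∈ p₂.support, w ∈ B \ A
  | _, _, nil, _, _, hx => Or.inl (by simpa using hx)
  | _, _, cons (v := v) h p, hp, ip, hx => by
    by_cases hv : v ∈ A
    · rcases hS.isIncreasing_path_cases hK hB p hp.of_cons ip.of_cons hv with
        hpA | ⟨s, w, p₁, h', p₂, rfl, hs, hp₁, hp₂⟩
      · left
        rw [support_cons, List.forall_mem_cons]
        exact ⟨hx, hpA⟩
      · refine Or.inr ⟨s, w, cons h p₁, h', p₂, rfl, hs, ?_, hp₂⟩
        rw [support_cons, List.forall_mem_cons]
        exact ⟨hx, hp₁⟩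
    · have hpA := hS.notMem_left_of_isIncreasing_cons hK hB h hp ip hx hv
      refine Or.inr ⟨_, v, nil, h, p, rfl, ⟨hx, ?_⟩, by simpa using hx, fun w hw => ?_⟩
      · exact hS.mem_right_of_adj h ⟨hS.mem_right_of_notMem_left hv, hv⟩
      · exact ⟨hS.mem_right_of_notMem_left (hpA w hw), hpA w hw⟩

lemma support_subset_left_of_isIncreasing (hS : IsSeparation G A B) (hK : G.IsClique (A ∩ B))
    (hB : IsGoodLabeling (G.induce B) (restrictLab lab B)) {x y : V} {p : G.Walk x y}
    (hp : p.IsPath) (ip : IsIncreasing G lab p) (hx : x ∈ A) (hy : y ∈ A) :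
    ∀ w ∈ p.support, w ∈ A := by
  rcases hS.isIncreasing_path_cases hK hB p hp ip hx with
    hpA | ⟨_, _, _, _, p₂, -, -, -, hp₂⟩
  · exact hpA
  · exact absurd hy (hp₂ y p₂.end_mem_support).2

lemma eq_of_isIncreasing_of_notMem_left (hS : IsSeparation G A B) (hK : G.IsClique (A ∩ B))
    (hA : IsGoodLabeling (G.induce A) (restrictLab lab A))
    (hB : IsGoodLabeling (G.induce B) (restrictLab lab B)) {x y : V} {p q : G.Walk x y}
    (hp : p.IsPath) (hq : q.IsPath) (ip : IsIncreasing G lab p) (iq : IsIncreasing G lab q)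
    (hx : x ∈ A) (hy : y ∉ A) : p = q := by
  have crossing := fun {r : G.Walk x y} (hr : r.IsPath) (ir : IsIncreasing G lab r) =>
    (hS.isIncreasing_path_cases hK hB r hr ir hx).resolve_left
      fun hrA => hy (hrA y r.end_mem_support)
  obtain ⟨s, v, p₁, h, p₂, rfl, hs, hp₁, hp₂⟩ := crossing hp ip
  obtain ⟨t, w, q₁, h', q₂, rfl, ht, hq₁, hq₂⟩ := crossing hq iq
  by_cases hst : s = t
  · subst hst
    rw [hA.eq_of_support_subset hp.of_append_left hq.of_append_left ip.of_append_left
        iq.of_append_left hp₁ hq₁,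
      hB.eq_of_support_subset hp.of_append_right hq.of_append_right ip.of_append_right
        iq.of_append_right (by simpa using ⟨hs.2, fun u hu => (hp₂ u hu).1⟩)
        (by simpa using ⟨hs.2, fun u hu => (hq₂ u hu).1⟩)]
  · have hadj := hK hs ht hst
    have hsv : lab s(s, v) < lab s(t, s) :=
      lab_lt_of_exits hB hs ht hadj.symm h h' hp.of_append_right hq.of_append_right
        ip.of_append_right iq.of_append_right hp₂ hq₂
    have htw : lab s(t, w) < lab s(s, t) :=
      lab_lt_of_exits hB ht hs hadj h' h hq.of_append_right hp.of_append_right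
        iq.of_append_right ip.of_append_right hq₂ hp₂
    refine (hA.false_of_getLast_lt hadj hp.of_append_left hq.of_append_left ip.of_append_left
      iq.of_append_left hp₁ hq₁ (fun α hα => ?_) (fun α hα => ?_)).elim
    · exact (ip.getLast_le_head α hα _ (by simp)).trans_lt (hsv.trans_eq (by rw [Sym2.eq_swap]))
    · exact (iq.getLast_le_head α hα _ (by simp)).trans_lt htw

lemma eq_of_isIncreasing_of_mem_left (hS : IsSeparation G A B) (hK : G.IsClique (A ∩ B))
    (hA : IsGoodLabeling (G.induce A) (restrictLab lab A))
    (hB : IsGoodLabeling (G.induce B) (restrictLab lab B)) {x y : V} {p q : G.Walk x y}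
    (hp : p.IsPath) (hq : q.IsPath) (ip : IsIncreasing G lab p) (iq : IsIncreasing G lab q)
    (hx : x ∈ A) : p = q := by
  by_cases hy : y ∈ A
  · exact hA.eq_of_support_subset hp hq ip iq
      (hS.support_subset_left_of_isIncreasing hK hB hp ip hx hy)
      (hS.support_subset_left_of_isIncreasing hK hB hq iq hx hy)
  · exact hS.eq_of_isIncreasing_of_notMem_left hK hA hB hp hq ip iq hx hy

theorem isGoodLabeling_of_induce (hS : IsSeparation G A B) (hK : G.IsClique (A ∩ B))
    (hA : IsGoodLabeling (G.induce A) (restrictLab lab A))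
    (hB : IsGoodLabeling (G.induce B) (restrictLab lab B)) : IsGoodLabeling G lab := by
  intro x y p q hp hq ip iq
  by_cases hx : x ∈ A
  · exact hS.eq_of_isIncreasing_of_mem_left hK hA hB hp hq ip iq hx
  · exact hS.symm.eq_of_isIncreasing_of_mem_left (Set.inter_comm A B ▸ hK) hB hA hp hq ip iq
      (hS.mem_right_of_notMem_left hx)

end IsSeparation

lemma Sym2.eq_mk_of_forall_mem_pair {α : Type*} {a b : α} {e : Sym2 α} (he : ¬ e.IsDiag)
    (h : ∀ v ∈ e, v = a ∨ v = b) : e = s(a, b) := by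
  induction e using Sym2.ind with
  | _ u v =>
    rcases h u (Sym2.mem_mk_left u v) with rfl | rfl <;>
      rcases h v (Sym2.mem_mk_right u v) with rfl | rfl
    exacts [absurd rfl he, rfl, Sym2.eq_swap, absurd rfl he]

lemma SimpleGraph.map_val_mem_edgeSet_of_mem_induce {V : Type*} {G : SimpleGraph V}
    {S : Set V} {e : Sym2 S} (he : e ∈ (G.induce S).edgeSet) : e.map (↑) ∈ G.edgeSet := by
  induction e using Sym2.ind with
  | _ u v => simpa using he

theorem IsSeparation.exists_isGoodLabeling {V : Type*} {G : SimpleGraph V} {A B : Set V}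
    {a b : V} (hS : IsSeparation G A B) (hinter : A ∩ B = {a, b}) (hadj : G.Adj a b)
    {μA : Sym2 A → ℝ} {μB : Sym2 B → ℝ} (hA : IsGoodLabeling (G.induce A) μA)
    (hB : IsGoodLabeling (G.induce B) μB) : ∃ lab, IsGoodLabeling G lab := by
  have ha : a ∈ A ∩ B := hinter ▸ Set.mem_insert a {b}
  have hb : b ∈ A ∩ B := hinter ▸ Set.mem_insert_of_mem a rfl
  have injA := Sym2.map.injective (Subtype.val_injective (p := (· ∈ A)))
  have injB := Sym2.map.injective (Subtype.val_injective (p := (· ∈ B)))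
  let eA : Sym2 A := s(⟨a, ha.1⟩, ⟨b, hb.1⟩)
  let eB : Sym2 B := s(⟨a, ha.2⟩, ⟨b, hb.2⟩)
  -- `ν` agrees with `μA` on `ab`, the only edge of both `G[A]` and `G[B]`
  let ν : Sym2 B → ℝ := (· + (μA eA - μB eB)) ∘ μB
  set lab := Function.extend (Sym2.map ((↑) : A → V)) μA
    (Function.extend (Sym2.map ((↑) : B → V)) ν 0) with hlab_def
  have hlabA : restrictLab lab A = μA := funext (injA.extend_apply μA _)
  have hlabB : ∀ e ∈ (G.induce B).edgeSet, ν e = restrictLab lab B e := by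
    intro e he
    by_cases hov : ∃ e' : Sym2 A, e'.map (↑) = (e.map (↑) : Sym2 V)
    · obtain ⟨e', he'⟩ := hov
      have hab : e.map (↑) = s(a, b) := by
        refine Sym2.eq_mk_of_forall_mem_pair
          (G.not_isDiag_of_mem_edgeSet (map_val_mem_edgeSet_of_mem_induce he))
          fun v hv => ?_
        have hvB : v ∈ B := by obtain ⟨w, -, rfl⟩ := Sym2.mem_map.1 hv; exact w.2
        have hvA : v ∈ A := by
          rw [← he'] at hv
          obtain ⟨w, -, rfl⟩ := Sym2.mem_map.1 hv
          exact w.2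
        have hv' : v ∈ ({a, b} : Set V) := hinter ▸ ⟨hvA, hvB⟩
        simpa using hv'
      have he'A : e' = eA := injA (he'.trans hab)
      have heB : e = eB := injB hab
      rw [restrictLab, hlab_def, ← he', injA.extend_apply, he'A, heB]
      exact add_sub_cancel _ _
    · rw [restrictLab, hlab_def, Function.extend_apply' _ _ _ hov, injB.extend_apply]
  exact ⟨lab, hS.isGoodLabeling_of_induce (hinter ▸ isClique_pair.2 fun _ => hadj)
    (hlabA ▸ hA) ((hB.comp_strictMono (strictMono_id.add_const _)).congr hlabB)⟩

theorem cgel_glue_along_separation_general {V : Type*} (G : SimpleGraph V) (c : ℕ)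
    (lab : Sym2 V → ℝ) (hlab : (lab '' G.edgeSet).ncard ≤ c)
    (A B : Set V) (hcover : A ∪ B = Set.univ)
    (hsep : ∀ u w : V, u ∈ A \ B → w ∈ B \ A → ¬ G.Adj u w)
    (a b : V) (hinter : A ∩ B = {a, b}) (hadj : G.Adj a b) :
    (IsCGel (G.induce A) c (restrictLab lab A) →
      IsCGel (G.induce B) c (restrictLab lab B) → IsCGel G c lab) ∧
    ((∃ μ, IsGoodLabeling (G.induce A) μ) → (∃ μ, IsGoodLabeling (G.induce B) μ) →
      ∃ μ, IsGoodLabeling G μ) := by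
  have hS : IsSeparation G A B := ⟨hcover, hsep⟩
  have hK : G.IsClique (A ∩ B) := hinter ▸ isClique_pair.2 fun _ => hadj
  exact ⟨fun hA hB => ⟨hS.isGoodLabeling_of_induce hK hA.1 hB.1, hlab⟩,
    fun ⟨_, hA⟩ ⟨_, hB⟩ => hS.exists_isGoodLabeling hinter hadj hA hB⟩

/-- Let `(A, B)` be a separation of `G` of order two whose two common vertices are adjacent,
and let `lab` be a `c`-edge-labeling of `G`. If the restrictions of `lab` to `G[A]` and to
`G[B]` are `c`-gels of `G[A]` and `G[B]` respectively, then `lab` is a `c`-gel of `G`.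
Moreover, if both `G[A]` and `G[B]` are good, then `G` is good. -/
theorem cgel_glue_along_separation {V : Type*} [Fintype V] (G : SimpleGraph V) (c : ℕ)
    (lab : Sym2 V → ℝ) (hlab : (lab '' G.edgeSet).ncard ≤ c)
    (A B : Set V) (hcover : A ∪ B = Set.univ)
    (hsep : ∀ u w : V, u ∈ A \ B → w ∈ B \ A → ¬ G.Adj u w)
    (a b : V) (hab : a ≠ b) (hinter : A ∩ B = {a, b}) (hadj : G.Adj a b) :
    (IsCGel (G.induce A) c (restrictLab lab A) →
      IsCGel (G.induce B) c (restrictLab lab B) → IsCGel G c lab) ∧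
    ((∃ μ, IsGoodLabeling (G.induce A) μ) → (∃ μ, IsGoodLabeling (G.induce B) μ) →
      ∃ μ, IsGoodLabeling G μ) :=
  cgel_glue_along_separation_general G c lab hlab A B hcover hsep a b hinter hadj
end

section
/- For every integer c ≥ 1, the hypercube graph H_c of dimension c admits a c-gel, i.e., a good edge-labeling taking at most c distinct values. -/
/-- The hypercube of dimension `c`: vertices are `{0,1}^c` and two vertices are adjacent if
and only if they differ in exactly one coordinate. -/
def Hypercube (c : ℕ) : SimpleGraph (Fin c → Bool) :=
  SimpleGraph.fromRel (fun x y => ∃! i : Fin c, x i ≠ y i)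

/-- The canonical labeling: the edge flipping coordinate `i` gets label `i`. -/
noncomputable def cubeLab (c : ℕ) : Sym2 (Fin c → Bool) → ℝ :=
  Sym2.lift ⟨fun x y => ∑ i : Fin c, if x i ≠ y i then (i.val : ℝ) else 0, by
    intro x y
    exact Finset.sum_congr rfl fun i _ => by simp [ne_comm]⟩

lemma adj_exu {c : ℕ} {x y : Fin c → Bool} (h : (Hypercube c).Adj x y) :
    ∃! i, x i ≠ y i := by
  rw [Hypercube, SimpleGraph.fromRel_adj] at h
  rcases h.2 with h' | h'
  · exact h'
  · obtain ⟨i, hi, hu⟩ := h'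
    exact ⟨i, hi.symm, fun j hj => hu j hj.symm⟩

lemma cubeLab_eq {c : ℕ} {x y : Fin c → Bool} (h : (Hypercube c).Adj x y) {i : Fin c}
    (hi : x i ≠ y i) : cubeLab c s(x, y) = (i.val : ℝ) := by
  obtain ⟨j, hj, hu⟩ := adj_exu h
  have hij : j = i := (hu i hi).symm ▸ rfl
  subst hij
  show (∑ k : Fin c, if x k ≠ y k then (k.val : ℝ) else 0) = (j.val : ℝ)
  rw [Finset.sum_eq_single j]
  · simp [hj]
  · intro k _ hk
    have : ¬ (x k ≠ y k) := fun hne => hk (hu k hne)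
    simp [this]
  · simp

lemma eq_of_ne_coord {c : ℕ} {x z : Fin c → Bool} (h : (Hypercube c).Adj x z) {i : Fin c}
    (hi : x i ≠ z i) {k : Fin c} (hk : k ≠ i) : x k = z k := by
  obtain ⟨j, hj, hu⟩ := adj_exu h
  by_contra hne
  exact hk ((hu k hne).trans (hu i hi).symm)

lemma bool_eq_of_ne {a b d : Bool} (h1 : a ≠ d) (h2 : b ≠ d) : a = b := by
  cases a <;> cases b <;> cases d <;> simp_all

lemma exists_flip {c : ℕ} {a b : Fin c → Bool} (p : (Hypercube c).Walk a b) (j : Fin c)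
    (hj : a j ≠ b j) : ((j.val : ℝ)) ∈ p.edges.map (cubeLab c) := by
  induction p with
  | nil => exact absurd rfl hj
  | @cons a w b h p ih =>
    by_cases haw : a j = w j
    · have : (j.val : ℝ) ∈ p.edges.map (cubeLab c) := ih (fun e => hj (haw.trans e))
      simp only [SimpleGraph.Walk.edges_cons, List.map_cons, List.mem_cons]
      exact Or.inr this
    · simp only [SimpleGraph.Walk.edges_cons, List.map_cons, List.mem_cons]
      exact Or.inl (cubeLab_eq h haw).symm

lemma first_flip_ne {c : ℕ} {x z y : Fin c → Bool} (h : (Hypercube c).Adj x z)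
    (p' : (Hypercube c).Walk z y) (hp : ((SimpleGraph.Walk.cons h p').IsPath))
    (hinc : IsIncreasing (Hypercube c) (cubeLab c) (SimpleGraph.Walk.cons h p'))
    {i : Fin c} (hi : x i ≠ z i) : x i ≠ y i := by
  intro hxy
  have hzy : z i ≠ y i := fun e => hi (hxy ▸ e.symm ▸ rfl)
  have hmem := exists_flip p' i hzy
  cases p' with
  | nil => simp at hmem
  | @cons z w y h2 p'' =>
    obtain ⟨k, hk, _⟩ := adj_exu h2
    have l1 : cubeLab c s(x, z) = (i.val : ℝ) := cubeLab_eq h hi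
    have l2 : cubeLab c s(z, w) = (k.val : ℝ) := cubeLab_eq h2 hk
    -- labels list
    have hlist : ((SimpleGraph.Walk.cons h (SimpleGraph.Walk.cons h2 p'')).edges.map
        (cubeLab c)) = (i.val : ℝ) :: (k.val : ℝ) :: (p''.edges.map (cubeLab c)) := by
      simp [SimpleGraph.Walk.edges_cons, l1, l2]
    rw [IsIncreasing, hlist] at hinc
    have hik : (i.val : ℝ) ≤ (k.val : ℝ) := (List.isChain_cons_cons.mp hinc).1
    -- hmem in tail list
    have hmem' : (i.val : ℝ) ∈ (k.val : ℝ) :: (p''.edges.map (cubeLab c)) := by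
      simpa [SimpleGraph.Walk.edges_cons, l2] using hmem
    have hki : (k.val : ℝ) ≤ (i.val : ℝ) := by
      rcases List.mem_cons.mp hmem' with h' | h'
      · exact le_of_eq h'.symm
      · have hpw : List.Pairwise (· ≤ ·) ((k.val : ℝ) :: (p''.edges.map (cubeLab c))) :=
          List.isChain_iff_pairwise.mp hinc.tail
        exact List.rel_of_pairwise_cons hpw h'
    have hik' : i = k := by
      have : (i.val : ℕ) = k.val := Nat.cast_injective (le_antisymm hik hki)
      exact Fin.ext this
    subst hik'
    -- the second step returns to x
    have hwx : w = x := by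
      funext m
      by_cases hm : m = i
      · subst hm
        exact bool_eq_of_ne (fun e => hk e.symm) hi |>.symm ▸ rfl
      · exact ((eq_of_ne_coord h2 hk hm).symm.trans (eq_of_ne_coord h hi hm).symm)
    have hx_mem : x ∈ (SimpleGraph.Walk.cons h2 p'').support := by
      rw [← hwx, SimpleGraph.Walk.support_cons]
      exact List.mem_cons_of_mem _ (SimpleGraph.Walk.start_mem_support p'')
    exact ((SimpleGraph.Walk.cons_isPath_iff h _).mp hp).2 hx_mem

lemma cube_good (c : ℕ) : IsGoodLabeling (Hypercube c) (cubeLab c) := by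
  intro x y p
  induction p with
  | nil =>
    intro q _ hq _ _
    cases q with
    | nil => rfl
    | cons h2 q' =>
      exact absurd (SimpleGraph.Walk.end_mem_support q')
        ((SimpleGraph.Walk.cons_isPath_iff h2 q').mp hq).2
  | @cons x z y h p' ih =>
    intro q hp hq hip hiq
    cases q with
    | nil =>
      exact absurd (SimpleGraph.Walk.end_mem_support p')
        ((SimpleGraph.Walk.cons_isPath_iff h p').mp hp).2
    | @cons x z2 y h2 q' =>
      obtain ⟨i, hi, _⟩ := adj_exu h
      obtain ⟨j, hj, _⟩ := adj_exu h2
      have hxyi : x i ≠ y i := first_flip_ne h p' hp hip hi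
      have hxyj : x j ≠ y j := first_flip_ne h2 q' hq hiq hj
      -- i ≤ j from p's chain and j flipped in p
      have l1 : cubeLab c s(x, z) = (i.val : ℝ) := cubeLab_eq h hi
      have l2 : cubeLab c s(x, z2) = (j.val : ℝ) := cubeLab_eq h2 hj
      have hij : (i.val : ℝ) ≤ (j.val : ℝ) := by
        have hmem := exists_flip (SimpleGraph.Walk.cons h p') j hxyj
        have hpw : List.Pairwise (· ≤ ·)
            ((SimpleGraph.Walk.cons h p').edges.map (cubeLab c)) :=
          List.isChain_iff_pairwise.mp hip
        rw [SimpleGraph.Walk.edges_cons, List.map_cons, l1] at hmem hpw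
        rcases List.mem_cons.mp hmem with h' | h'
        · exact le_of_eq h'.symm
        · exact List.rel_of_pairwise_cons hpw h'
      have hji : (j.val : ℝ) ≤ (i.val : ℝ) := by
        have hmem := exists_flip (SimpleGraph.Walk.cons h2 q') i hxyi
        have hpw : List.Pairwise (· ≤ ·)
            ((SimpleGraph.Walk.cons h2 q').edges.map (cubeLab c)) :=
          List.isChain_iff_pairwise.mp hiq
        rw [SimpleGraph.Walk.edges_cons, List.map_cons, l2] at hmem hpw
        rcases List.mem_cons.mp hmem with h' | h'
        · exact le_of_eq h'.symm
        · exact List.rel_of_pairwise_cons hpw h'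
      have hije : i = j := Fin.ext (Nat.cast_injective (le_antisymm hij hji))
      subst hije
      have hz : z = z2 := by
        funext m
        by_cases hm : m = i
        · subst hm; exact bool_eq_of_ne (fun e => hi e.symm) (fun e => hj e.symm)
        · exact (eq_of_ne_coord h hi hm).symm.trans (eq_of_ne_coord h2 hj hm)
      subst hz
      have : p' = q' := ih q' ((SimpleGraph.Walk.cons_isPath_iff h p').mp hp).1
        ((SimpleGraph.Walk.cons_isPath_iff h2 q').mp hq).1 hip.tail hiq.tail
      rw [this]

/-- For every `c ≥ 1`, the hypercube of dimension `c` admits a `c`-gel, i.e. a good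
edge-labeling taking at most `c` distinct values. -/
theorem hypercube_cgel (c : ℕ) (hc : 1 ≤ c) :
    ∃ lab : Sym2 (Fin c → Bool) → ℝ,
      IsGoodLabeling (Hypercube c) lab ∧ (lab '' (Hypercube c).edgeSet).ncard ≤ c := by
  refine ⟨cubeLab c, cube_good c, ?_⟩
  have hsub : cubeLab c '' (Hypercube c).edgeSet ⊆
      Set.range (fun i : Fin c => (i.val : ℝ)) := by
    rintro r ⟨e, he, rfl⟩
    induction e using Sym2.ind with
    | _ a b =>
      rw [SimpleGraph.mem_edgeSet] at he
      obtain ⟨i, hi, _⟩ := adj_exu he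
      exact ⟨i, (cubeLab_eq he hi).symm⟩
  calc (cubeLab c '' (Hypercube c).edgeSet).ncard
      ≤ (Set.range (fun i : Fin c => (i.val : ℝ))).ncard :=
        Set.ncard_le_ncard hsub (Set.finite_range _)
    _ ≤ c := by
        rw [← Set.image_univ]
        calc ((fun i : Fin c => (i.val : ℝ)) '' Set.univ).ncard
            ≤ Set.univ.ncard := Set.ncard_image_le Set.finite_univ
          _ = c := by simp [Set.ncard_univ]
end

section
/- Let c ≥ 2 and let λ be any good edge-labeling of the c-color gadget D_c. Then λ(v v_i) ≠ λ(v v_j) for all i ≠ j ∈ [c]. In particular, D_c does not admit a (c−1)-gel. -/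
/-- The vertices of the `c`-color gadget: `Sum.inl ()` is the vertex `v`, `Sum.inr (Sum.inl i)`
is the vertex `v_i`, and `Sum.inr (Sum.inr p)` with `p.1 < p.2` is the vertex `v_{i,j}`. -/
def DVert (c : ℕ) : Type :=
  Unit ⊕ Fin c ⊕ {p : Fin c × Fin c // p.1 < p.2}

/-- The `c`-color gadget `D_c`, with edges `v v_i` for each `i`, and `v_i v_{i,j}`,
`v_j v_{i,j}` for each `i < j`. -/
def DGadget (c : ℕ) : SimpleGraph (DVert c) :=
  SimpleGraph.fromRel (fun a b =>
    (∃ i : Fin c, a = Sum.inl () ∧ b = Sum.inr (Sum.inl i)) ∨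
    (∃ (i : Fin c) (p : {p : Fin c × Fin c // p.1 < p.2}),
      a = Sum.inr (Sum.inl i) ∧ b = Sum.inr (Sum.inr p) ∧ (p.val.1 = i ∨ p.val.2 = i)))

/-
If two vertices `x ≠ y` have two distinct common neighbours `m₁, m₂`, then the two-edge path
`x m₁ y` must not carry equal labels: it would then be increasing in both directions, while
`x m₂ y` is increasing in at least one of them, giving two increasing paths between the same
ordered pair. In `D_c`, the vertices `v_i, v_j` have the common neighbours `v` and `v_{i,j}`, so
`λ(v v_i) ≠ λ(v v_j)`. Hence the labels of the `c` edges at `v` are pairwise distinct, and a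
good labeling of `D_c` uses at least `c` values.
-/

section TwoStepPaths

variable {V : Type*} {G : SimpleGraph V} {lab : Sym2 V → ℝ} {x y m m₁ m₂ : V}

lemma SimpleGraph.Walk.isPath_cons_cons_nil (h₁ : G.Adj x m) (h₂ : G.Adj m y) (hxy : x ≠ y) :
    (Walk.cons h₁ (Walk.cons h₂ Walk.nil)).IsPath := by
  simp [Walk.isPath_def, hxy, h₁.ne, h₂.ne]

lemma isIncreasing_cons_cons_nil_iff (h₁ : G.Adj x m) (h₂ : G.Adj m y) :
    IsIncreasing G lab (.cons h₁ (.cons h₂ .nil)) ↔ lab s(x, m) ≤ lab s(m, y) :=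
  List.isChain_pair

lemma IsGoodLabeling.eq_of_le_of_le (hg : IsGoodLabeling G lab) (hxy : x ≠ y)
    (hx₁ : G.Adj x m₁) (h₁y : G.Adj m₁ y) (hx₂ : G.Adj x m₂) (h₂y : G.Adj m₂ y)
    (hle₁ : lab s(x, m₁) ≤ lab s(m₁, y)) (hle₂ : lab s(x, m₂) ≤ lab s(m₂, y)) : m₁ = m₂ := by
  have hwalk := hg x y _ _ (SimpleGraph.Walk.isPath_cons_cons_nil hx₁ h₁y hxy)
    (SimpleGraph.Walk.isPath_cons_cons_nil hx₂ h₂y hxy)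
    ((isIncreasing_cons_cons_nil_iff hx₁ h₁y).mpr hle₁)
    ((isIncreasing_cons_cons_nil_iff hx₂ h₂y).mpr hle₂)
  simpa using congrArg SimpleGraph.Walk.support hwalk

lemma IsGoodLabeling.label_ne_of_common_neighbors (hg : IsGoodLabeling G lab) (hxy : x ≠ y)
    (hm : m₁ ≠ m₂) (hx₁ : G.Adj x m₁) (h₁y : G.Adj m₁ y) (hx₂ : G.Adj x m₂)
    (h₂y : G.Adj m₂ y) : lab s(x, m₁) ≠ lab s(m₁, y) := by
  intro heq
  rcases le_total (lab s(x, m₂)) (lab s(m₂, y)) with hle | hle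
  · exact hm (hg.eq_of_le_of_le hxy hx₁ h₁y hx₂ h₂y heq.le hle)
  · refine hm (hg.eq_of_le_of_le hxy.symm h₁y.symm hx₁.symm h₂y.symm hx₂.symm ?_ ?_)
    · rw [Sym2.eq_swap (a := y), Sym2.eq_swap (a := m₁) (b := x)]
      exact heq.symm.le
    · rwa [Sym2.eq_swap (a := y), Sym2.eq_swap (a := m₂) (b := x)]

end TwoStepPaths

namespace DGadget

variable {c : ℕ}

instance : Finite (DVert c) := by unfold DVert; infer_instance

lemma adj_center (i : Fin c) : (DGadget c).Adj (Sum.inl ()) (Sum.inr (Sum.inl i)) :=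
  (SimpleGraph.fromRel_adj ..).mpr ⟨Sum.inl_ne_inr, .inl (.inl ⟨i, rfl, rfl⟩)⟩

lemma adj_pair (i : Fin c) (p : {p : Fin c × Fin c // p.1 < p.2}) (h : p.val.1 = i ∨ p.val.2 = i) :
    (DGadget c).Adj (Sum.inr (Sum.inl i)) (Sum.inr (Sum.inr p)) :=
  (SimpleGraph.fromRel_adj ..).mpr
    ⟨fun hh => Sum.inl_ne_inr (Sum.inr_injective hh), .inl (.inr ⟨i, p, rfl, rfl, h⟩)⟩

lemma exists_common_neighbor_ne_center {i j : Fin c} (hij : i ≠ j) :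
    ∃ w : DVert c, w ≠ Sum.inl () ∧
      (DGadget c).Adj (Sum.inr (Sum.inl i)) w ∧ (DGadget c).Adj w (Sum.inr (Sum.inl j)) := by
  rcases hij.lt_or_gt with h | h
  · exact ⟨_, Sum.inr_ne_inl, adj_pair i ⟨(i, j), h⟩ (.inl rfl),
      (adj_pair j ⟨(i, j), h⟩ (.inr rfl)).symm⟩
  · exact ⟨_, Sum.inr_ne_inl, adj_pair i ⟨(j, i), h⟩ (.inr rfl),
      (adj_pair j ⟨(j, i), h⟩ (.inl rfl)).symm⟩

lemma injective_label_center {lab : Sym2 (DVert c) → ℝ} (hg : IsGoodLabeling (DGadget c) lab) :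
    Function.Injective fun i : Fin c => lab s(Sum.inl (), Sum.inr (Sum.inl i)) := by
  intro i j heq
  by_contra hij
  obtain ⟨w, hw, hiw, hwj⟩ := exists_common_neighbor_ne_center hij
  exact hg.label_ne_of_common_neighbors (fun h => hij (Sum.inl_injective
      (Sum.inr_injective h))) hw.symm (adj_center i).symm (adj_center j) hiw hwj
    ((congrArg lab Sym2.eq_swap).trans heq)

lemma le_ncard_image_edgeSet {lab : Sym2 (DVert c) → ℝ} (hg : IsGoodLabeling (DGadget c) lab) :
    c ≤ (lab '' (DGadget c).edgeSet).ncard := by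
  have hsub : Set.range (fun i : Fin c => lab s(Sum.inl (), Sum.inr (Sum.inl i))) ⊆
      lab '' (DGadget c).edgeSet := by
    rintro _ ⟨i, rfl⟩
    exact ⟨_, adj_center i, rfl⟩
  calc c = Nat.card (Fin c) := (Nat.card_fin c).symm
    _ = _ := (Set.ncard_range_of_injective (injective_label_center hg)).symm
    _ ≤ _ := Set.ncard_le_ncard hsub

end DGadget

/-- Let `c ≥ 2`. For any good edge-labeling `lab` of `D_c`, the labels of the edges `v v_i`
are pairwise distinct. In particular, `D_c` does not admit a `(c-1)`-gel. -/
theorem color_gadget_distinct_labels (c : ℕ) (hc : 2 ≤ c) :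
    (∀ lab : Sym2 (DVert c) → ℝ, IsGoodLabeling (DGadget c) lab →
      ∀ i j : Fin c, i ≠ j →
        lab s((Sum.inl () : DVert c), Sum.inr (Sum.inl i)) ≠
          lab s((Sum.inl () : DVert c), Sum.inr (Sum.inl j))) ∧
    ¬ ∃ lab : Sym2 (DVert c) → ℝ,
        IsGoodLabeling (DGadget c) lab ∧ (lab '' (DGadget c).edgeSet).ncard ≤ c - 1 := by
  refine ⟨fun lab hg i j hij heq => hij (DGadget.injective_label_center hg heq), ?_⟩
  rintro ⟨lab, hg, hcard⟩
  have := DGadget.le_ncard_image_edgeSet hg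
  omega
end
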